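/- Let X be a finite set and Y = Y_1 × Y_2 a product of finite sets, and P_{Y|X} a CPT from X to Y with induced CPTs P_{Y_1|X} (marginalising Y_2) and P_{Y_2|X,Y_1} (conditioning on Y_1). Then d⁺(P_{Y|X}) ≤ min{ d⁺(P_{Y_1|X}) + d⁺(P_{Y_2|X,Y_1}), 1 }, assuming all relevant conditional distributions are well-defined (positivity). -/
import Mathlib


noncomputable def dV {Z : Type*} [Fintype Z] (p q : Z → ℝ) : ℝ :=
  (1/2) * ∑ z, |p z - q z|

def IsPMF {Z : Type*} [Fintype Z] (p : Z → ℝ) : Prop :=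
  (∀ z, 0 ≤ p z) ∧ ∑ z, p z = 1

noncomputable def diam {X Y : Type*} [Fintype X] [Fintype Y]
    (P : X → Y → ℝ) : ℝ :=
  ⨆ x : X, ⨆ x' : X, dV (P x) (P x')

lemma dV_nonneg {Z : Type*} [Fintype Z] (p q : Z → ℝ) : 0 ≤ dV p q := by
  unfold dV; positivity

lemma dV_le_one {Z : Type*} [Fintype Z] {p q : Z → ℝ} (hp : IsPMF p) (hq : IsPMF q) :
    dV p q ≤ 1 := by
  unfold dV
  have h : ∑ z, |p z - q z| ≤ ∑ z, (p z + q z) :=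
    Finset.sum_le_sum fun z _ => by
      have h2 := abs_sub (p z) (q z)
      rwa [abs_of_nonneg (hp.1 z), abs_of_nonneg (hq.1 z)] at h2
  rw [Finset.sum_add_distrib, hp.2, hq.2] at h
  linarith

lemma le_diam {X Y : Type*} [Fintype X] [Fintype Y] [Nonempty X] (Q : X → Y → ℝ)
    (h1 : ∀ a b, dV (Q a) (Q b) ≤ 1) (a b : X) : dV (Q a) (Q b) ≤ diam Q := by
  have hb : ∀ a, BddAbove (Set.range fun b => dV (Q a) (Q b)) := fun a =>
    ⟨1, by rintro _ ⟨b, rfl⟩; exact h1 a b⟩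
  have houter : BddAbove (Set.range fun a => ⨆ b, dV (Q a) (Q b)) :=
    ⟨1, by rintro _ ⟨a, rfl⟩; exact ciSup_le (h1 a)⟩
  calc dV (Q a) (Q b) ≤ ⨆ b, dV (Q a) (Q b) := le_ciSup (hb a) b
    _ ≤ diam Q := le_ciSup houter a

lemma diam_le {X Y : Type*} [Fintype X] [Fintype Y] [Nonempty X] (Q : X → Y → ℝ)
    {c : ℝ} (h : ∀ a b, dV (Q a) (Q b) ≤ c) : diam Q ≤ c :=
  ciSup_le fun a => ciSup_le (h a)

lemma chain {Y1 Y2 : Type*} [Fintype Y1] [Fintype Y2] [Nonempty Y1] (p q : Y1 × Y2 → ℝ)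
    (hp : IsPMF p) (hq : IsPMF q) (hpp : ∀ y, 0 < p y) (hqp : ∀ y, 0 < q y)
    (D2 : ℝ)
    (hD2 : ∀ y1, dV (fun y2 => p (y1, y2) / ∑ y2', p (y1, y2'))
        (fun y2 => q (y1, y2) / ∑ y2', q (y1, y2')) ≤ D2) :
    dV p q ≤ dV (fun y1 => ∑ y2, p (y1, y2)) (fun y1 => ∑ y2, q (y1, y2)) + D2 := by
  haveI : Nonempty Y2 := by
    by_contra h
    simp only [not_nonempty_iff] at h
    have := hp.2
    rw [Finset.univ_eq_empty, Finset.sum_empty] at this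
    exact one_ne_zero this.symm
  set p1 : Y1 → ℝ := fun y1 => ∑ y2, p (y1, y2) with hp1
  set q1 : Y1 → ℝ := fun y1 => ∑ y2, q (y1, y2) with hq1
  have hp1pos : ∀ y1, 0 < p1 y1 := fun y1 =>
    Finset.sum_pos (fun y2 _ => hpp (y1, y2)) Finset.univ_nonempty
  have hq1pos : ∀ y1, 0 < q1 y1 := fun y1 =>
    Finset.sum_pos (fun y2 _ => hqp (y1, y2)) Finset.univ_nonempty
  have hD2nn : 0 ≤ D2 := le_trans (dV_nonneg _ _) (hD2 (Classical.arbitrary Y1))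
  have key : ∀ y1, ∑ y2, |p (y1, y2) - q (y1, y2)| ≤
      p1 y1 * (2 * D2) + |p1 y1 - q1 y1| := by
    intro y1
    have hcond := hD2 y1
    unfold dV at hcond
    have hsum : ∑ y2, |p (y1, y2) / p1 y1 - q (y1, y2) / q1 y1| ≤ 2 * D2 := by
      linarith
    have step : ∀ y2, |p (y1, y2) - q (y1, y2)| ≤
        p1 y1 * |p (y1, y2) / p1 y1 - q (y1, y2) / q1 y1| +
          |p1 y1 - q1 y1| * (q (y1, y2) / q1 y1) := by
      intro y2
      have e1 : p (y1, y2) - q (y1, y2) =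
          p1 y1 * (p (y1, y2) / p1 y1 - q (y1, y2) / q1 y1) +
            (p1 y1 - q1 y1) * (q (y1, y2) / q1 y1) := by
        have hpne : p1 y1 ≠ 0 := (hp1pos y1).ne'
        have hqne : q1 y1 ≠ 0 := (hq1pos y1).ne'
        field_simp
        ring
      rw [e1]
      refine le_trans (abs_add_le _ _) ?_
      rw [abs_mul, abs_mul, abs_of_nonneg (hp1pos y1).le,
        abs_of_nonneg (div_nonneg (hqp (y1, y2)).le (hq1pos y1).le)]
    calc ∑ y2, |p (y1, y2) - q (y1, y2)|
        ≤ ∑ y2, (p1 y1 * |p (y1, y2) / p1 y1 - q (y1, y2) / q1 y1| +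
            |p1 y1 - q1 y1| * (q (y1, y2) / q1 y1)) :=
          Finset.sum_le_sum fun y2 _ => step y2
      _ = p1 y1 * (∑ y2, |p (y1, y2) / p1 y1 - q (y1, y2) / q1 y1|) +
            |p1 y1 - q1 y1| * (∑ y2, q (y1, y2) / q1 y1) := by
          rw [Finset.sum_add_distrib, Finset.mul_sum, Finset.mul_sum]
      _ ≤ p1 y1 * (2 * D2) + |p1 y1 - q1 y1| * 1 := by
          have he : (∑ y2, q (y1, y2) / q1 y1) = 1 := by
            rw [← Finset.sum_div]
            exact div_self (hq1pos y1).ne'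
          rw [he]
          have := mul_le_mul_of_nonneg_left hsum (hp1pos y1).le
          linarith
      _ = p1 y1 * (2 * D2) + |p1 y1 - q1 y1| := by ring
  have hsum1 : ∑ y1, p1 y1 = 1 := by
    rw [← hp.2, ← Fintype.sum_prod_type]
  unfold dV
  have total : ∑ y, |p y - q y| ≤ 2 * D2 + ∑ y1, |p1 y1 - q1 y1| := by
    rw [Fintype.sum_prod_type]
    calc ∑ y1, ∑ y2, |p (y1, y2) - q (y1, y2)|
        ≤ ∑ y1, (p1 y1 * (2 * D2) + |p1 y1 - q1 y1|) :=
          Finset.sum_le_sum fun y1 _ => key y1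
      _ = (∑ y1, p1 y1) * (2 * D2) + ∑ y1, |p1 y1 - q1 y1| := by
          rw [Finset.sum_add_distrib, ← Finset.sum_mul]
      _ = 2 * D2 + ∑ y1, |p1 y1 - q1 y1| := by rw [hsum1]; ring
  linarith

theorem stmt9 {X Y1 Y2 : Type*} [Fintype X] [Fintype Y1] [Fintype Y2]
    [Nonempty X] [Nonempty Y1]
    (P : X → Y1 × Y2 → ℝ) (hP : ∀ x, IsPMF (P x))
    (hpos : ∀ x y, 0 < P x y) :
    diam P ≤
      min
        (diam (fun x : X => fun y1 => ∑ y2, P x (y1, y2)) +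
          diam (fun xy1 : X × Y1 => fun y2 =>
            P xy1.1 (xy1.2, y2) / ∑ y2', P xy1.1 (xy1.2, y2')))
        1 := by
  haveI : Nonempty Y2 := by
    by_contra h
    simp only [not_nonempty_iff] at h
    have := (hP (Classical.arbitrary X)).2
    rw [Finset.univ_eq_empty, Finset.sum_empty] at this
    exact one_ne_zero this.symm
  set Q1 : X → Y1 → ℝ := fun x y1 => ∑ y2, P x (y1, y2) with hQ1
  set Q2 : X × Y1 → Y2 → ℝ := fun xy1 y2 =>
    P xy1.1 (xy1.2, y2) / ∑ y2', P xy1.1 (xy1.2, y2') with hQ2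
  have hQ1pos : ∀ x y1, 0 < Q1 x y1 := fun x y1 =>
    Finset.sum_pos (fun y2 _ => hpos x (y1, y2)) Finset.univ_nonempty
  have hQ1pmf : ∀ x, IsPMF (Q1 x) := fun x =>
    ⟨fun y1 => (hQ1pos x y1).le, by rw [← (hP x).2, ← Fintype.sum_prod_type]⟩
  have hQ2pmf : ∀ z, IsPMF (Q2 z) := by
    intro z
    constructor
    · intro y2
      exact div_nonneg (hpos z.1 (z.2, y2)).le (hQ1pos z.1 z.2).le
    · show (∑ y2, P z.1 (z.2, y2) / ∑ y2', P z.1 (z.2, y2')) = 1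
      rw [← Finset.sum_div]
      exact div_self (hQ1pos z.1 z.2).ne'
  apply diam_le
  intro a b
  rw [le_min_iff]
  refine ⟨?_, dV_le_one (hP a) (hP b)⟩
  have hD2 : ∀ y1, dV (fun y2 => P a (y1, y2) / ∑ y2', P a (y1, y2'))
      (fun y2 => P b (y1, y2) / ∑ y2', P b (y1, y2')) ≤ diam Q2 := by
    intro y1
    exact le_diam Q2 (fun z w => dV_le_one (hQ2pmf z) (hQ2pmf w)) (a, y1) (b, y1)
  have hchain := chain (P a) (P b) (hP a) (hP b) (hpos a) (hpos b) (diam Q2) hD2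
  have h1 : dV (Q1 a) (Q1 b) ≤ diam Q1 :=
    le_diam Q1 (fun z w => dV_le_one (hQ1pmf z) (hQ1pmf w)) a b
  calc dV (P a) (P b) ≤ dV (Q1 a) (Q1 b) + diam Q2 := hchain
    _ ≤ diam Q1 + diam Q2 := by linarith
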